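/- Consider the ODE w'' + h(w) = 0, where h : ℝ → ℝ is locally Lipschitz, satisfies h(s)·s > 0 for all s ≠ 0, and its primitive H(s) = ∫₀ˢ h(σ)dσ tends to +∞ as |s| → ∞. If w₁ and w₂ are two global solutions of w'' + h(w) = 0 with nonzero initial data and with the same conserved energy, i.e. w₁'(0)²/2 + H(w₁(0)) = w₂'(0)²/2 + H(w₂(0)), then w₁ and w₂ coincide up to a translation in time: there exists R ∈ ℝ such that w₁(t) = w₂(t + R) for all t ∈ ℝ. -/

import Mathlib

/-!
The energy `E = w'²/2 + H(w)` is conserved. As `H` decreases on `(-∞, 0]`, increases on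
`[0, ∞)` and is coercive, a solution of energy `c > 0` is confined to `[a, b]` with
`H a = H b = c`, and `w'` vanishes exactly when `w ∈ {a, b}`. If `w'` never vanished after
some time, the bounded monotone `w` would converge to some `L`; then `w'' → -h(L)` with `w'`
bounded forces `L = 0`, and `w'² → 2c > 0` with `w` bounded is absurd. So `w'` vanishes at
arbitrarily late times, and a maximum of `w` between two such times is a visit of `(b, 0)`
(were it `a`, `w` would be constant `a`, which is not a solution). Two solutions with the same
energy therefore both pass through `(b, 0)`, and uniqueness for the system
`(w, w')' = (w', -h(w))`, Lipschitz on `[a, b] × ℝ`, shows they differ by a time shift.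
-/

open Set Filter Topology

theorem eq_zero_of_tendsto_deriv_sq {f : ℝ → ℝ} {C ℓ : ℝ} (hf : Differentiable ℝ f)
    (hC : ∀ t, |f t| ≤ C) (hℓ : Tendsto (fun t => deriv f t ^ 2) atTop (𝓝 ℓ)) : ℓ = 0 := by
  have hℓ₀ : 0 ≤ ℓ := ge_of_tendsto' hℓ fun t => sq_nonneg _
  by_contra hne
  have hpos : 0 < ℓ := hℓ₀.lt_of_ne' hne
  obtain ⟨T, hT⟩ := eventually_atTop.mp (hℓ.eventually (lt_mem_nhds (half_lt_self hpos)))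
  -- On `[T, T + s]` the derivative is at least `√(ℓ/2)` in size, which moves `f` by more than `2C`.
  set s := 8 * C ^ 2 / ℓ + 1
  have hs : ℓ / 2 * s = 4 * C ^ 2 + ℓ / 2 := by simp only [s]; field_simp; ring
  have hs₁ : 1 ≤ s := le_add_of_nonneg_left (by positivity)
  obtain ⟨ξ, hξ, hslope⟩ := exists_deriv_eq_slope f (by linarith : T < T + s)
    hf.continuous.continuousOn (fun x _ => (hf x).differentiableWithinAt)
  have hincr : deriv f ξ * s = f (T + s) - f T := by
    rw [hslope, add_sub_cancel_left, div_mul_cancel₀ _ (by linarith)]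
  have hsq : (f (T + s) - f T) ^ 2 ≤ 4 * C ^ 2 := by
    have h₁ := abs_le.mp (hC (T + s)); have h₂ := abs_le.mp (hC T)
    nlinarith
  have hξT := hT ξ hξ.1.le
  have : ℓ / 2 * s ≤ deriv f ξ ^ 2 * s ^ 2 := by
    calc ℓ / 2 * s ≤ ℓ / 2 * s ^ 2 := by gcongr; nlinarith
      _ ≤ deriv f ξ ^ 2 * s ^ 2 := by gcongr
  rw [← mul_pow, hincr] at this
  linarith

theorem exists_tendsto_atTop_of_deriv_ne_zero {f : ℝ → ℝ} {T C : ℝ} (hf : Differentiable ℝ f)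
    (hf' : ∀ t ∈ Ici T, deriv f t ≠ 0) (hC : ∀ t, |f t| ≤ C) :
    ∃ L, Tendsto f atTop (𝓝 L) := by
  set g : ℝ → ℝ := fun t => f (max t T)
  have hfg : g =ᶠ[atTop] f :=
    (eventually_ge_atTop T).mono fun t ht => by simp only [g, max_eq_left ht]
  have hbdd : BddBelow (range g) ∧ BddAbove (range g) :=
    ⟨⟨-C, by rintro _ ⟨t, rfl⟩; exact (abs_le.mp (hC _)).1⟩,
      ⟨C, by rintro _ ⟨t, rfl⟩; exact (abs_le.mp (hC _)).2⟩⟩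
  have hmax : Monotone fun t : ℝ => max t T := fun _ _ hxy => max_le_max hxy le_rfl
  rcases hasDerivWithinAt_forall_lt_or_forall_gt_of_forall_ne (convex_Ici T)
    (fun t _ => (hf t).hasDerivAt.hasDerivWithinAt) hf' with hneg | hpos
  · have hanti : AntitoneOn f (Ici T) := (strictAntiOn_of_deriv_neg (convex_Ici T)
      hf.continuous.continuousOn fun t ht => hneg t (interior_subset ht)).antitoneOn
    exact ⟨_, (tendsto_atTop_ciInf (fun x y hxy => hanti (le_max_right x T) (le_max_right y T)
      (hmax hxy)) hbdd.1).congr' hfg⟩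
  · have hmono : MonotoneOn f (Ici T) := (strictMonoOn_of_deriv_pos (convex_Ici T)
      hf.continuous.continuousOn fun t ht => hpos t (interior_subset ht)).monotoneOn
    exact ⟨_, (tendsto_atTop_ciSup (fun x y hxy => hmono (le_max_right x T) (le_max_right y T)
      (hmax hxy)) hbdd.2).congr' hfg⟩

theorem exists_isMaxOn_Icc_deriv_eq_zero {f : ℝ → ℝ} {a b : ℝ} (hf : Differentiable ℝ f)
    (hab : a ≤ b) (ha : deriv f a = 0) (hb : deriv f b = 0) :
    ∃ m ∈ Icc a b, IsMaxOn f (Icc a b) m ∧ deriv f m = 0 := by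
  obtain ⟨m, hm, hmax⟩ := isCompact_Icc.exists_isMaxOn (nonempty_Icc.mpr hab)
    hf.continuous.continuousOn
  refine ⟨m, hm, hmax, ?_⟩
  rcases eq_endpoints_or_mem_Ioo_of_mem_Icc hm with rfl | rfl | hm'
  · exact ha
  · exact hb
  · exact (hmax.isLocalMax (Icc_mem_nhds hm'.1 hm'.2)).deriv_eq_zero

noncomputable def potential (h : ℝ → ℝ) (s : ℝ) : ℝ := ∫ σ in (0 : ℝ)..s, h σ

noncomputable def energy (h w : ℝ → ℝ) (t : ℝ) : ℝ := deriv w t ^ 2 / 2 + potential h (w t)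

section Potential

variable {h : ℝ → ℝ}

theorem hasDerivAt_potential (hc : Continuous h) (s : ℝ) : HasDerivAt (potential h) (h s) s :=
  (hc.integral_hasStrictDerivAt 0 s).hasDerivAt

theorem continuous_potential (hc : Continuous h) : Continuous (potential h) :=
  continuous_iff_continuousAt.mpr fun s => (hasDerivAt_potential hc s).continuousAt

@[simp]
theorem potential_zero : potential h 0 = 0 := intervalIntegral.integral_same

theorem strictMonoOn_potential (hc : Continuous h) (hsign : ∀ s, s ≠ 0 → 0 < h s * s) :
    StrictMonoOn (potential h) (Ici 0) := by
  refine strictMonoOn_of_deriv_pos (convex_Ici 0) (continuous_potential hc).continuousOn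
    fun s hs => ?_
  rw [interior_Ici, mem_Ioi] at hs
  rw [(hasDerivAt_potential hc s).deriv]
  exact pos_of_mul_pos_left (hsign s hs.ne') hs.le

theorem strictAntiOn_potential (hc : Continuous h) (hsign : ∀ s, s ≠ 0 → 0 < h s * s) :
    StrictAntiOn (potential h) (Iic 0) := by
  refine strictAntiOn_of_deriv_neg (convex_Iic 0) (continuous_potential hc).continuousOn
    fun s hs => ?_
  rw [interior_Iic, mem_Iio] at hs
  rw [(hasDerivAt_potential hc s).deriv]
  exact neg_of_mul_pos_left (hsign s hs.ne) hs.le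

theorem potential_pos (hc : Continuous h) (hsign : ∀ s, s ≠ 0 → 0 < h s * s) {s : ℝ}
    (hs : s ≠ 0) : 0 < potential h s := by
  rcases hs.lt_or_gt with hs | hs
  · simpa using strictAntiOn_potential hc hsign hs.le self_mem_Iic hs
  · simpa using strictMonoOn_potential hc hsign self_mem_Ici hs.le hs

theorem potential_nonneg (hc : Continuous h) (hsign : ∀ s, s ≠ 0 → 0 < h s * s) (s : ℝ) :
    0 ≤ potential h s := by
  rcases eq_or_ne s 0 with rfl | hs
  · exact potential_zero.ge
  · exact (potential_pos hc hsign hs).le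

theorem exists_potential_eq (hc : Continuous h)
    (hH : Tendsto (potential h) (cocompact ℝ) atTop) {c : ℝ} (hc₀ : 0 < c) :
    ∃ a b, a < 0 ∧ 0 < b ∧ potential h a = c ∧ potential h b = c := by
  rw [cocompact_eq_atBot_atTop, tendsto_sup] at hH
  obtain ⟨M, hM, hcM⟩ :=
    ((eventually_ge_atTop 0).and (hH.2.eventually (eventually_ge_atTop c))).exists
  obtain ⟨N, hN, hcN⟩ :=
    ((eventually_le_atBot 0).and (hH.1.eventually (eventually_ge_atTop c))).exists
  obtain ⟨b, hb, hHb⟩ := intermediate_value_Icc hM (continuous_potential hc).continuousOn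
    ⟨potential_zero.trans_le hc₀.le, hcM⟩
  obtain ⟨a, ha, hHa⟩ := intermediate_value_Icc' hN (continuous_potential hc).continuousOn
    ⟨potential_zero.trans_le hc₀.le, hcN⟩
  refine ⟨a, b, ha.2.lt_of_ne ?_, hb.1.lt_of_ne' ?_, hHa, hHb⟩ <;>
  · rintro rfl
    simp only [potential_zero] at hHa hHb
    linarith

theorem mem_Icc_of_potential_le (hc : Continuous h) (hsign : ∀ s, s ≠ 0 → 0 < h s * s)
    {a b c x : ℝ} (ha : a ≤ 0) (hb : 0 ≤ b) (hHa : potential h a = c) (hHb : potential h b = c)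
    (hx : potential h x ≤ c) : x ∈ Icc a b := by
  constructor
  · by_contra! hxa
    exact (strictAntiOn_potential hc hsign (hxa.le.trans ha) ha hxa).not_ge (hHa ▸ hx)
  · by_contra! hbx
    exact (strictMonoOn_potential hc hsign hb (hb.trans hbx.le) hbx).not_ge (hHb ▸ hx)

theorem eq_or_eq_of_potential_eq (hc : Continuous h) (hsign : ∀ s, s ≠ 0 → 0 < h s * s)
    {a b c x : ℝ} (ha : a ≤ 0) (hb : 0 ≤ b) (hHa : potential h a = c) (hHb : potential h b = c)
    (hx : potential h x = c) : x = a ∨ x = b := by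
  rcases le_total x 0 with hx₀ | hx₀
  · exact .inl ((strictAntiOn_potential hc hsign).injOn hx₀ ha (hx.trans hHa.symm))
  · exact .inr ((strictMonoOn_potential hc hsign).injOn hx₀ hb (hx.trans hHb.symm))

theorem energy_pos_of_ne_zero (hc : Continuous h) (hsign : ∀ s, s ≠ 0 → 0 < h s * s)
    {w : ℝ → ℝ} {t : ℝ} (hw : (w t, deriv w t) ≠ (0, 0)) : 0 < energy h w t := by
  rw [energy]
  rcases eq_or_ne (w t) 0 with hw₀ | hw₀
  · have hv : deriv w t ≠ 0 := fun hv => hw (by rw [hw₀, hv])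
    have := potential_nonneg hc hsign (w t)
    positivity
  · have := potential_pos hc hsign hw₀
    positivity

theorem mem_Icc_of_energy_eq (hc : Continuous h) (hsign : ∀ s, s ≠ 0 → 0 < h s * s)
    {w : ℝ → ℝ} {a b c : ℝ} (ha : a ≤ 0) (hb : 0 ≤ b) (hHa : potential h a = c)
    (hHb : potential h b = c) (hen : ∀ t, energy h w t = c) (t : ℝ) : w t ∈ Icc a b := by
  refine mem_Icc_of_potential_le hc hsign ha hb hHa hHb ?_
  rw [← hen t, energy]
  linarith [sq_nonneg (deriv w t)]

end Potential

structure IsSolution (h w : ℝ → ℝ) : Prop where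
  contDiff : ContDiff ℝ 2 w
  ode : ∀ t, deriv (deriv w) t + h (w t) = 0

namespace IsSolution

variable {h w : ℝ → ℝ}

theorem differentiable (hw : IsSolution h w) : Differentiable ℝ w :=
  hw.contDiff.differentiable (by norm_num)

theorem differentiable_deriv (hw : IsSolution h w) : Differentiable ℝ (deriv w) :=
  hw.contDiff.differentiable_deriv_two

theorem comp_add_const (hw : IsSolution h w) (R : ℝ) : IsSolution h fun t => w (t + R) := by
  have hderiv : deriv (fun t => w (t + R)) = fun t => deriv w (t + R) :=
    funext (deriv_comp_add_const w R)
  refine ⟨hw.contDiff.comp (contDiff_id.add contDiff_const), fun t => ?_⟩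
  rw [hderiv, deriv_comp_add_const (deriv w) R t]
  exact hw.ode (t + R)

theorem hasDerivAt_phase (hw : IsSolution h w) (t : ℝ) :
    HasDerivAt (fun t => (w t, deriv w t)) (deriv w t, -h (w t)) t :=
  (hw.differentiable t).hasDerivAt.prodMk
    ((hw.differentiable_deriv t).hasDerivAt.congr_deriv (eq_neg_of_add_eq_zero_left (hw.ode t)))

theorem hasDerivAt_energy (hw : IsSolution h w) (hc : Continuous h) (t : ℝ) :
    HasDerivAt (energy h w) 0 t := by
  have hE : HasDerivAt (energy h w)
      (2 * deriv w t ^ 1 * deriv (deriv w) t / 2 + h (w t) * deriv w t) t :=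
    (((hw.differentiable_deriv t).hasDerivAt.pow 2).div_const 2).add
      ((hasDerivAt_potential hc (w t)).comp t (hw.differentiable t).hasDerivAt)
  refine hE.congr_deriv ?_
  rw [eq_neg_of_add_eq_zero_left (hw.ode t)]
  ring

theorem energy_eq (hw : IsSolution h w) (hc : Continuous h) (t s : ℝ) :
    energy h w t = energy h w s :=
  is_const_of_deriv_eq_zero (fun t => (hw.hasDerivAt_energy hc t).differentiableAt)
    (fun t => (hw.hasDerivAt_energy hc t).deriv) t s

theorem apply_eq_zero_of_eqOn_Icc (hw : IsSolution h w) {t₀ t₁ x : ℝ} (ht : t₀ < t₁)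
    (hx : EqOn w (fun _ => x) (Icc t₀ t₁)) : h x = 0 := by
  set s := (t₀ + t₁) / 2
  have hs₀ : t₀ < s := left_lt_add_div_two.mpr ht
  have hs₁ : s < t₁ := add_div_two_lt_right.mpr ht
  have hconst : w =ᶠ[𝓝 s] fun _ => x := eventuallyEq_of_mem (Icc_mem_nhds hs₀ hs₁) hx
  have hw'' : deriv (deriv w) s = 0 := by
    rw [hconst.deriv.deriv_eq]
    simp
  simpa [hw'', hx ⟨hs₀.le, hs₁.le⟩] using hw.ode s

theorem exists_deriv_eq_zero_ge (hw : IsSolution h w) (hc : Continuous h)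
    (hsign : ∀ s, s ≠ 0 → 0 < h s * s) {C c : ℝ} (hC : ∀ t, |w t| ≤ C) (hc₀ : 0 < c)
    (hen : ∀ t, energy h w t = c) (T : ℝ) : ∃ t ≥ T, deriv w t = 0 := by
  by_contra! hne
  obtain ⟨L, hL⟩ := exists_tendsto_atTop_of_deriv_ne_zero hw.differentiable hne hC
  have hv : ∀ t, deriv w t ^ 2 = 2 * (c - potential h (w t)) := fun t => by
    rw [← hen t, energy]; ring
  have hv_bdd : ∀ t, |deriv w t| ≤ √(2 * c) := fun t => Real.abs_le_sqrt <| by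
    rw [hv]; linarith [potential_nonneg hc hsign (w t)]
  -- `w'' = -h(w) → -h(L)` while `w'` stays bounded, so `h(L) = 0`, i.e. `L = 0`.
  have hhL : h L ^ 2 = 0 := by
    refine eq_zero_of_tendsto_deriv_sq hw.differentiable_deriv hv_bdd ?_
    refine (((hc.tendsto L).comp hL).pow 2).congr fun t => ?_
    rw [eq_neg_of_add_eq_zero_left (hw.ode t), neg_sq]
    rfl
  have hL₀ : L = 0 := by
    by_contra hL₀
    exact (hsign L hL₀).ne' (by rw [pow_eq_zero_iff two_ne_zero |>.mp hhL, zero_mul])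
  have hlim : 2 * c = 0 := by
    refine eq_zero_of_tendsto_deriv_sq hw.differentiable hC ?_
    have := (((continuous_potential hc).tendsto L).comp hL).const_sub c |>.const_mul 2
    rw [hL₀, potential_zero, sub_zero] at this
    exact this.congr fun t => (hv t).symm
  linarith

theorem exists_eq_and_deriv_eq_zero (hw : IsSolution h w) (hc : Continuous h)
    (hsign : ∀ s, s ≠ 0 → 0 < h s * s) {a b c : ℝ} (ha : a < 0) (hb : 0 < b)
    (hHa : potential h a = c) (hHb : potential h b = c) (hen : ∀ t, energy h w t = c) :
    ∃ t, w t = b ∧ deriv w t = 0 := by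
  have hmem := mem_Icc_of_energy_eq hc hsign ha.le hb.le hHa hHb hen
  have hturn : ∀ t, deriv w t = 0 → w t = a ∨ w t = b := fun t ht =>
    eq_or_eq_of_potential_eq hc hsign ha.le hb.le hHa hHb (by simpa [energy, ht] using hen t)
  have hbdd : ∀ t, |w t| ≤ max (-a) b := fun t =>
    abs_le.mpr ⟨by linarith [le_max_left (-a) b, (hmem t).1], (hmem t).2.trans (le_max_right _ _)⟩
  have hc₀ : 0 < c := hHb ▸ potential_pos hc hsign hb.ne'
  obtain ⟨t₀, -, ht₀⟩ := hw.exists_deriv_eq_zero_ge hc hsign hbdd hc₀ hen 0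
  obtain ⟨t₁, ht₁, ht₁'⟩ := hw.exists_deriv_eq_zero_ge hc hsign hbdd hc₀ hen (t₀ + 1)
  -- A maximum of `w` on `[t₀, t₁]` is a turning point; it cannot be `a`, for then `w ≡ a` there.
  obtain ⟨m, -, hmax, hm⟩ :=
    exists_isMaxOn_Icc_deriv_eq_zero hw.differentiable (by linarith) ht₀ ht₁'
  refine (hturn m hm).elim (fun hma => ?_) fun hmb => ⟨m, hmb, hm⟩
  have hconst : EqOn w (fun _ => a) (Icc t₀ t₁) := fun t ht =>
    le_antisymm (hma ▸ hmax ht) (hmem t).1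
  have hha : h a ≠ 0 := fun h0 => (hsign a ha.ne).ne' (by rw [h0, zero_mul])
  exact absurd (hw.apply_eq_zero_of_eqOn_Icc (by linarith) hconst) hha

theorem eq_of_eq_of_deriv_eq {w₂ : ℝ → ℝ} (hw : IsSolution h w) (hw₂ : IsSolution h w₂)
    {s : Set ℝ} {K : NNReal} (hK : LipschitzOnWith K h s) (hs : ∀ t, w t ∈ s)
    (hs₂ : ∀ t, w₂ t ∈ s) {t₀ : ℝ} (h₀ : w t₀ = w₂ t₀) (h₀' : deriv w t₀ = deriv w₂ t₀) :
    w = w₂ := by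
  have hneg : LipschitzOnWith (K * 1) (fun p : ℝ × ℝ => -h p.1) (s ×ˢ univ) :=
    (hK.comp LipschitzWith.prod_fst.lipschitzOnWith fun _ hp => hp.1).neg
  rw [mul_one] at hneg
  have hv : LipschitzOnWith (max 1 K) (fun p : ℝ × ℝ => (p.2, -h p.1)) (s ×ˢ univ) :=
    LipschitzWith.prod_snd.lipschitzOnWith.prodMk hneg
  have := ODE_solution_unique_univ (v := fun _ p => (p.2, -h p.1)) (s := fun _ => s ×ˢ univ)
    (f := fun t => (w t, deriv w t)) (g := fun t => (w₂ t, deriv w₂ t)) (t₀ := t₀)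
    (fun _ => hv) (fun t => ⟨hw.hasDerivAt_phase t, hs t, trivial⟩)
    (fun t => ⟨hw₂.hasDerivAt_phase t, hs₂ t, trivial⟩) (Prod.ext h₀ h₀')
  exact funext fun t => congrArg Prod.fst (congrFun this t)

end IsSolution

theorem solutions_with_same_energy_coincide_up_to_translation_general
    (h : ℝ → ℝ) (hlip : LocallyLipschitz h)
    (hsign : ∀ s : ℝ, s ≠ 0 → h s * s > 0)
    (hH : Filter.Tendsto (fun s : ℝ => ∫ σ in (0:ℝ)..s, h σ)
      (Filter.cocompact ℝ) Filter.atTop)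
    (w₁ w₂ : ℝ → ℝ) (hw₁ : ContDiff ℝ 2 w₁) (hw₂ : ContDiff ℝ 2 w₂)
    (hode₁ : ∀ t : ℝ, deriv (deriv w₁) t + h (w₁ t) = 0)
    (hode₂ : ∀ t : ℝ, deriv (deriv w₂) t + h (w₂ t) = 0)
    (hne₁ : (w₁ 0, deriv w₁ 0) ≠ (0, 0))
    (henergy : (deriv w₁ 0) ^ 2 / 2 + ∫ σ in (0:ℝ)..(w₁ 0), h σ
             = (deriv w₂ 0) ^ 2 / 2 + ∫ σ in (0:ℝ)..(w₂ 0), h σ) :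
    ∃ R : ℝ, ∀ t : ℝ, w₁ t = w₂ (t + R) := by
  have hc := hlip.continuous
  have hs₁ : IsSolution h w₁ := ⟨hw₁, hode₁⟩
  have hs₂ : IsSolution h w₂ := ⟨hw₂, hode₂⟩
  set c := energy h w₁ 0
  have hen₁ : ∀ t, energy h w₁ t = c := fun t => hs₁.energy_eq hc t 0
  have hen₂ : ∀ t, energy h w₂ t = c := fun t => (hs₂.energy_eq hc t 0).trans henergy.symm
  obtain ⟨a, b, ha, hb, hHa, hHb⟩ :=
    exists_potential_eq hc hH (energy_pos_of_ne_zero hc hsign hne₁)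
  -- Both solutions pass through the turning point `(b, 0)`; align those two instants.
  obtain ⟨t₁, hwt₁, hvt₁⟩ := hs₁.exists_eq_and_deriv_eq_zero hc hsign ha hb hHa hHb hen₁
  obtain ⟨t₂, hwt₂, hvt₂⟩ := hs₂.exists_eq_and_deriv_eq_zero hc hsign ha hb hHa hHb hen₂
  have ht : t₁ + (t₂ - t₁) = t₂ := add_sub_cancel t₁ t₂
  obtain ⟨K, hK⟩ :=
    hlip.locallyLipschitzOn.exists_lipschitzOnWith_of_compact (isCompact_Icc (a := a) (b := b))
  have hmem₁ := mem_Icc_of_energy_eq hc hsign ha.le hb.le hHa hHb hen₁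
  have hmem₂ := mem_Icc_of_energy_eq hc hsign ha.le hb.le hHa hHb hen₂
  refine ⟨t₂ - t₁, congrFun (hs₁.eq_of_eq_of_deriv_eq (hs₂.comp_add_const (t₂ - t₁)) hK
    hmem₁ (fun t => hmem₂ _) (t₀ := t₁) ?_ ?_)⟩
  · simp only [ht, hwt₁, hwt₂]
  · rw [deriv_comp_add_const, ht, hvt₁, hvt₂]

/-- For the ODE `w'' + h(w) = 0` with `h` locally Lipschitz,
`h(s)·s > 0` for `s ≠ 0`, and primitive `H(s) = ∫₀ˢ h → ∞` as `|s| → ∞`: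
two global solutions with nonzero initial data and the same conserved energy
`w'(0)²/2 + H(w(0))` coincide up to a translation in time. -/
theorem solutions_with_same_energy_coincide_up_to_translation
    (h : ℝ → ℝ) (hlip : LocallyLipschitz h)
    (hsign : ∀ s : ℝ, s ≠ 0 → h s * s > 0)
    (hH : Filter.Tendsto (fun s : ℝ => ∫ σ in (0:ℝ)..s, h σ)
      (Filter.cocompact ℝ) Filter.atTop)
    (w₁ w₂ : ℝ → ℝ) (hw₁ : ContDiff ℝ 2 w₁) (hw₂ : ContDiff ℝ 2 w₂)
    (hode₁ : ∀ t : ℝ, deriv (deriv w₁) t + h (w₁ t) = 0)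
    (hode₂ : ∀ t : ℝ, deriv (deriv w₂) t + h (w₂ t) = 0)
    (hne₁ : (w₁ 0, deriv w₁ 0) ≠ (0, 0))
    (hne₂ : (w₂ 0, deriv w₂ 0) ≠ (0, 0))
    (henergy : (deriv w₁ 0) ^ 2 / 2 + ∫ σ in (0:ℝ)..(w₁ 0), h σ
             = (deriv w₂ 0) ^ 2 / 2 + ∫ σ in (0:ℝ)..(w₂ 0), h σ) :
    ∃ R : ℝ, ∀ t : ℝ, w₁ t = w₂ (t + R) :=
  solutions_with_same_energy_coincide_up_to_translation_general h hlip hsign hH w₁ w₂ hw₁ hw₂ hode₁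
    hode₂ hne₁ henergy
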